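/- Let h : Q → P be a strict map of integral monoids (i.e., the induced map Q/Q* → P/P* of sharpenings is an isomorphism). Then the following are equivalent: (1) h is free (P is a free Q-module via h); (2) h is flat (P is a flat Q-module via h); (3) h is injective. -/

import Mathlib

section MonMod

variable (P : Type) [CommMonoid P] (M : Type) [MulAction P M]

/-- `S ⊆ M` is a basis of the `P`-module `M`: the action map `P × S → M` is bijective. -/
def IsBasisSet (S : Set M) : Prop :=
  Function.Bijective fun x : P × S => x.1 • (x.2 : M)

/-- `M` is a free `P`-module: it admits a basis. -/
def IsFreeMod : Prop := ∃ S : Set M, IsBasisSet P M S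

/-- `M` is a torsion-free `P`-module. -/
def IsTorsionFreeMod : Prop := ∀ (p p' : P) (m : M), p • m = p' • m → p = p'

/-- `M` is a comparable `P`-module. -/
def IsComparableMod : Prop :=
  ∀ (p₁ p₂ : P) (m₁ m₂ : M), p₁ • m₁ = p₂ • m₂ →
    ∃ (m : M) (ρ₁ ρ₂ : P), ρ₁ • m = m₁ ∧ ρ₂ • m = m₂

/-- `M` is a flat `P`-module: it is a filtered direct limit of free `P`-modules.
This is spelled out explicitly: there is a nonempty directed (filtered) index
preorder `(ι, r)`, a functorial system `F` of `P`-modules with free members and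
equivariant transition maps `t`, together with equivariant maps `g i : F i → M`
exhibiting `M` as the direct limit of the system. -/
def IsFlatMod : Prop :=
  ∃ (ι : Type) (r : ι → ι → Prop) (F : ι → Type) (act : ∀ i, P → F i → F i)
    (t : ∀ i j, r i j → F i → F j) (g : ∀ i, F i → M),
    Nonempty ι ∧
    (∀ i, r i i) ∧
    (∀ i j k, r i j → r j k → r i k) ∧
    (∀ i j, ∃ k, r i k ∧ r j k) ∧
    -- each `F i` is a `P`-module:
    (∀ i (x : F i), act i 1 x = x) ∧
    (∀ i (p q : P) (x : F i), act i (p * q) x = act i p (act i q x)) ∧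
    -- each `F i` is free:
    (∀ i, ∃ S : Set (F i), Function.Bijective fun x : P × S => act i x.1 (x.2 : F i)) ∧
    -- transition maps are equivariant and functorial:
    (∀ i j (hij : r i j) (p : P) (x : F i), t i j hij (act i p x) = act j p (t i j hij x)) ∧
    (∀ i (hii : r i i) (x : F i), t i i hii x = x) ∧
    (∀ i j k (hij : r i j) (hjk : r j k) (hik : r i k) (x : F i),
       t j k hjk (t i j hij x) = t i k hik x) ∧
    -- the maps to `M` are equivariant and compatible:
    (∀ i (p : P) (x : F i), g i (act i p x) = p • g i x) ∧
    (∀ i j (hij : r i j) (x : F i), g j (t i j hij x) = g i x) ∧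
    -- `M` is the direct limit of the system:
    (∀ m : M, ∃ i, ∃ x : F i, g i x = m) ∧
    (∀ i j (x : F i) (y : F j), g i x = g j y →
       ∃ k, ∃ (hik : r i k) (hjk : r j k), t i k hik x = t j k hjk y)

end MonMod

/-- The congruence relation on a commutative monoid identifying elements that differ by a unit.
The quotient is the sharpening `P̄ = P/P*`. -/
def unitsCon (P : Type) [CommMonoid P] : Con P where
  r a b := ∃ u : Pˣ, a * (u : P) = b
  iseqv :=
    { refl := fun a => ⟨1, by simp⟩
      symm := by
        rintro a b ⟨u, rfl⟩
        exact ⟨u⁻¹, by rw [mul_assoc, Units.mul_inv, mul_one]⟩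
      trans := by
        rintro a b c ⟨u, rfl⟩ ⟨v, rfl⟩
        exact ⟨u * v, by rw [Units.val_mul, mul_assoc]⟩ }
  mul' := by
    rintro w x y z ⟨u, rfl⟩ ⟨v, rfl⟩
    exact ⟨u * v, by rw [Units.val_mul, mul_mul_mul_comm]⟩

/-- The sharpening `P̄ = P/P*` of a commutative monoid. -/
abbrev SharpMon (P : Type) [CommMonoid P] : Type := (unitsCon P).Quotient

/-- The monoid homomorphism `Q̄ → P̄` induced on sharpenings by `h : Q →* P`. -/
def sharpHom {Q P : Type} [CommMonoid Q] [CommMonoid P] (h : Q →* P) :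
    SharpMon Q →* SharpMon P :=
  Con.lift _ ((unitsCon P).mk'.comp h) (by
    rintro a b ⟨u, rfl⟩
    show ((h a : P) : SharpMon P) = ((h (a * (u : Q)) : P) : SharpMon P)
    refine (Con.eq _).mpr ⟨Units.map (h : Q →* P) u, ?_⟩
    simp [map_mul])

/-- The `Q`-module structure on `P` induced by a monoid homomorphism `h : Q →* P`,
with action `q • p = h q * p`. -/
def mulActionOfHom {Q P : Type} [Monoid Q] [Monoid P] (h : Q →* P) : MulAction Q P where
  smul q p := h q * p
  one_smul p := show h 1 * p = p by rw [map_one, one_mul]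
  mul_smul q q' p := show h (q * q') * p = h q * (h q' * p) by rw [map_mul, mul_assoc]

/-!
A strict map `h` writes every `p ∈ P` as `h q * u` with `u` a unit, and when `h` is injective
and `P` is cancellative the pair `(q, class of u in Pˣ / h(Qˣ))` is unique; so a set of
representatives of `Pˣ / h(Qˣ)` is a basis and `h` is free. Free implies flat trivially, and a
flat module over a cancellative monoid is torsion-free (a relation `p • m = p' • m` already holds
in some free member of the system), which for `m = 1` is injectivity of `h`.
-/

section Modules

variable (P : Type) [CommMonoid P] (M : Type) [MulAction P M]

theorem IsFreeMod.isFlatMod (hM : IsFreeMod P M) : IsFlatMod P M :=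
  ⟨Unit, fun _ _ => True, fun _ => M, fun _ => (· • ·), fun _ _ _ => id, fun _ => id,
    ⟨()⟩, fun _ => trivial, fun _ _ _ _ _ => trivial, fun _ _ => ⟨(), trivial, trivial⟩,
    fun _ => one_smul P, fun _ => mul_smul, fun _ => hM,
    fun _ _ _ _ _ => rfl, fun _ _ _ => rfl, fun _ _ _ _ _ _ _ => rfl,
    fun _ _ _ => rfl, fun _ _ _ _ => rfl, fun m => ⟨(), m, rfl⟩,
    fun _ _ _ _ hxy => ⟨(), trivial, trivial, hxy⟩⟩

variable {P}

theorem eq_of_act_eq_of_free [IsRightCancelMul P] {X : Type} (act : P → X → X)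
    (hmul : ∀ (p q : P) (x : X), act (p * q) x = act p (act q x)) {S : Set X}
    (hS : Function.Bijective fun x : P × S => act x.1 (x.2 : X)) {p p' : P} {x : X}
    (hx : act p x = act p' x) : p = p' := by
  obtain ⟨⟨q, s⟩, rfl⟩ := hS.2 x
  have hpq : (p * q, s) = (p' * q, s) := hS.1 (by simpa only [hmul] using hx)
  exact mul_right_cancel (congrArg Prod.fst hpq)

theorem IsFlatMod.isTorsionFreeMod [IsRightCancelMul P] (hM : IsFlatMod P M) :
    IsTorsionFreeMod P M := by
  obtain ⟨ι, r, F, act, t, g, -, -, -, -, -, hmul, hfree, ht_act, -, -, hg_act, -, hg_surj,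
    hg_eq⟩ := hM
  intro p p' m hm
  obtain ⟨i, x, rfl⟩ := hg_surj m
  obtain ⟨k, _, _, htk⟩ := hg_eq i i (act i p x) (act i p' x) (by rw [hg_act, hg_act, hm])
  obtain ⟨S, hS⟩ := hfree k
  exact eq_of_act_eq_of_free (act k) (hmul k) hS (by rwa [ht_act, ht_act] at htk)

end Modules

section StrictHom

variable {Q P : Type} [CommMonoid Q] [CommMonoid P] (h : Q →* P)

theorem mulActionOfHom_smul (q : Q) (p : P) :
    letI := mulActionOfHom h
    q • p = h q * p := rfl

theorem injective_of_isTorsionFreeMod (htf : @IsTorsionFreeMod Q _ P (mulActionOfHom h)) :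
    Function.Injective h :=
  fun q q' hq => htf q q' 1 (by rw [mulActionOfHom_smul, mulActionOfHom_smul, hq])

theorem sharpMon_mk_eq_mk_iff {a b : P} : (a : SharpMon P) = b ↔ ∃ u : Pˣ, a * u = b :=
  Con.eq _

theorem exists_map_mul_unit_eq (hs : Function.Surjective (sharpHom h)) (p : P) :
    ∃ (q : Q) (u : Pˣ), h q * u = p := by
  obtain ⟨x, hx⟩ := hs p
  obtain ⟨q, rfl⟩ := Quotient.exists_rep x
  exact ⟨q, sharpMon_mk_eq_mk_iff.mp hx⟩

theorem exists_mul_unit_eq_of_map_mul_unit_eq (hi : Function.Injective (sharpHom h))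
    {q q' : Q} {u u' : Pˣ} (hq : h q * u = h q' * u') : ∃ v : Qˣ, q' * v = q := by
  refine sharpMon_mk_eq_mk_iff.mp (hi (sharpMon_mk_eq_mk_iff.mpr ⟨u' * u⁻¹, ?_⟩))
  rw [Units.val_mul, ← mul_assoc, ← hq, mul_assoc, Units.mul_inv, mul_one]

theorem isBasisSet_range_out_of_strict [IsLeftCancelMul P]
    (hstrict : Function.Bijective (sharpHom h)) (hinj : Function.Injective h) :
    @IsBasisSet Q _ P (mulActionOfHom h)
      (Set.range fun c : Pˣ ⧸ (Units.map h).range => ((c.out : Pˣ) : P)) := by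
  constructor
  · rintro ⟨q, _, c, rfl⟩ ⟨q', _, c', rfl⟩ hqc
    replace hqc : h q * c.out = h q' * c'.out := hqc
    obtain ⟨v, rfl⟩ := exists_mul_unit_eq_of_map_mul_unit_eq h hstrict.1 hqc
    have hv : ((Units.map h v * c.out : Pˣ) : P) = c'.out := by
      rw [map_mul, mul_assoc] at hqc
      exact mul_left_cancel hqc
    have hcc : c = c' := by
      rw [← QuotientGroup.out_eq' c, ← QuotientGroup.out_eq' c', QuotientGroup.eq,
        ← Units.ext hv, mul_comm, mul_inv_cancel_right]
      exact ⟨v, rfl⟩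
    subst hcc
    have hv1 : (c.out : P) * h v = c.out * h 1 := by
      rw [map_one, mul_one, mul_comm]
      exact hv
    rw [Units.val_eq_one.mp (hinj (mul_left_cancel hv1)), Units.val_one, mul_one]
  · intro p
    obtain ⟨q, u, rfl⟩ := exists_map_mul_unit_eq h hstrict.2 p
    obtain ⟨⟨_, v, rfl⟩, hv⟩ := QuotientGroup.mk_out_eq_mul (Units.map h).range u
    refine ⟨(q * ↑v⁻¹, ⟨_, Set.mem_range_self (QuotientGroup.mk u)⟩), ?_⟩
    show h (q * ↑v⁻¹) * ((QuotientGroup.mk u : Pˣ ⧸ _).out : P) = h q * u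
    rw [hv]
    simp only [Units.val_mul, Units.coe_map, mul_left_comm, ← map_mul, mul_assoc, Units.inv_mul,
      mul_one]
    exact mul_comm _ _

end StrictHom

/-- Let `h : Q → P` be a strict map of integral (commutative) monoids, i.e. the
induced map `Q/Q* → P/P*` of sharpenings is an isomorphism. Then the following are equivalent:
(1) `h` is free (`P` is a free `Q`-module via `h`); (2) `h` is flat (`P` is a flat
`Q`-module via `h`); (3) `h` is injective. -/
theorem stmt7 (Q P : Type) [CommMonoid Q] [CommMonoid P]
    (hQ : ∀ a b c : Q, a * b = a * c → b = c)
    (hP : ∀ a b c : P, a * b = a * c → b = c)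
    (h : Q →* P) (hstrict : Function.Bijective (sharpHom h)) :
    List.TFAE [@IsFreeMod Q _ P (mulActionOfHom h),
      @IsFlatMod Q _ P (mulActionOfHom h),
      Function.Injective h] := by
  have : IsLeftCancelMul Q := ⟨hQ⟩
  have := CommMagma.IsLeftCancelMul.toIsCancelMul Q
  have : IsLeftCancelMul P := ⟨hP⟩
  let _ := mulActionOfHom h
  tfae_have 1 → 2 := IsFreeMod.isFlatMod Q P
  tfae_have 2 → 3 := fun hflat => injective_of_isTorsionFreeMod h hflat.isTorsionFreeMod
  tfae_have 3 → 1 := fun hinj => ⟨_, isBasisSet_range_out_of_strict h hstrict hinj⟩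
  tfae_finish
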